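/- Let G be a finite simple graph on vertex set V, let S ⊆ V, and let u, v ∈ S be two distinct vertices adjacent in G. Suppose G ⊕ S is diamond-free. Write N_S(ūv̄) = S ∩ (V \ (N[u] ∪ N[v])). Let x, y ∈ N_S(ūv̄) be adjacent in G and let J = N[x] ∩ N[y] ∩ (V \ (N[u] ∪ N[v])). Then N_S(ūv̄) ⊆ J and J \ S is an independent set of G; that is, J induces a split graph with split partition (N_S(ūv̄), J \ N_S(ūv̄)). -/

import Mathlib

/-- Subgraph complementation: `scompl G S` complements the subgraph of `G` induced by `S`. -/
def scompl {V : Type*} (G : SimpleGraph V) (S : Set V) : SimpleGraph V where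
  Adj x y := x ≠ y ∧ ((x ∈ S ∧ y ∈ S ∧ ¬ G.Adj x y) ∨ (¬(x ∈ S ∧ y ∈ S) ∧ G.Adj x y))
  symm := by
    constructor
    rintro x y ⟨hxy, h⟩
    refine ⟨hxy.symm, ?_⟩
    rcases h with ⟨hx, hy, h⟩ | ⟨h, hadj⟩
    · exact Or.inl ⟨hy, hx, fun h' => h h'.symm⟩
    · exact Or.inr ⟨fun hc => h ⟨hc.2, hc.1⟩, hadj.symm⟩
  loopless := ⟨fun x h => h.1 rfl⟩

/-- Degree of a vertex in a finite simple graph. -/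
noncomputable def deg {V : Type*} [Fintype V] (G : SimpleGraph V) (v : V) : ℕ :=
  (G.neighborSet v).ncard

/-- `a, b, c, d` form an induced diamond with `a`, `b` its degree-2 vertices. -/
def IsDiamond {V : Type*} (G : SimpleGraph V) (a b c d : V) : Prop :=
  a ≠ b ∧ a ≠ c ∧ a ≠ d ∧ b ≠ c ∧ b ≠ d ∧ c ≠ d ∧
  G.Adj a c ∧ G.Adj a d ∧ G.Adj b c ∧ G.Adj b d ∧ G.Adj c d ∧ ¬ G.Adj a b

def DiamondFree {V : Type*} (G : SimpleGraph V) : Prop :=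
  ∀ a b c d : V, ¬ IsDiamond G a b c d

/-- `r` together with the `t` distinct leaves `f 0, …, f (t-1)` forms an induced `K_{1,t}`
with center `r`. -/
def IsStar {V : Type*} (G : SimpleGraph V) (t : ℕ) (r : V) (f : Fin t → V) : Prop :=
  Function.Injective f ∧ (∀ i, G.Adj r (f i)) ∧ ∀ i j, i ≠ j → ¬ G.Adj (f i) (f j)

def StarFree {V : Type*} (G : SimpleGraph V) (t : ℕ) : Prop :=
  ∀ (r : V) (f : Fin t → V), ¬ IsStar G t r f

/- Complementing on `S` turns the edge `uv` into a non-edge and the non-edges of `S` into edges,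
while leaving the edges leaving `S` untouched. In a diamond-free graph two distinct non-adjacent
vertices have an independent common neighbourhood; applied to the pair `u, v` this makes every two
vertices of `N_S(ūv̄)` adjacent in `G` (so `N_S(ūv̄) ⊆ J`), and applied to the pair `x, y` it makes
`J \ S` independent. -/

section

variable {V : Type*} {G : SimpleGraph V} {S : Set V} {x y : V}

theorem DiamondFree.eq_or_adj_of_adj_commonNeighbors {H : SimpleGraph V} (hdf : DiamondFree H)
    {a b c d : V} (hc : c ∈ H.commonNeighbors a b) (hd : d ∈ H.commonNeighbors a b)
    (hcd : H.Adj c d) : a = b ∨ H.Adj a b := by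
  rw [SimpleGraph.mem_commonNeighbors] at hc hd
  by_contra! h
  exact hdf a b c d ⟨h.1, hc.1.ne, hd.1.ne, hc.2.ne, hd.2.ne, hcd.ne,
    hc.1, hd.1, hc.2, hd.2, hcd, h.2⟩

theorem scompl_adj_iff_of_mem (hx : x ∈ S) (hy : y ∈ S) :
    (scompl G S).Adj x y ↔ x ≠ y ∧ ¬ G.Adj x y := by
  simp [scompl, hx, hy]

theorem scompl_adj_iff_of_notMem_left (hx : x ∉ S) : (scompl G S).Adj x y ↔ G.Adj x y := by
  simp only [scompl, hx, false_and, false_or, not_false_eq_true, true_and]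
  exact ⟨And.right, fun h => ⟨h.ne, h⟩⟩

theorem scompl_adj_iff_of_notMem_right (hy : y ∉ S) : (scompl G S).Adj x y ↔ G.Adj x y := by
  rw [SimpleGraph.adj_comm, scompl_adj_iff_of_notMem_left hy, SimpleGraph.adj_comm]

theorem eq_or_adj_of_scompl_diamondFree_of_nonneighbors (hdf : DiamondFree (scompl G S))
    {u v w z : V} (hu : u ∈ S) (hv : v ∈ S) (huv : G.Adj u v)
    (hw : w ∈ S) (hwu : w ≠ u) (hwv : w ≠ v) (huw : ¬ G.Adj u w) (hvw : ¬ G.Adj v w)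
    (hz : z ∈ S) (hzu : z ≠ u) (hzv : z ≠ v) (huz : ¬ G.Adj u z) (hvz : ¬ G.Adj v z) :
    w = z ∨ G.Adj w z := by
  by_contra! h
  have hcommon : ∀ t ∈ S, t ≠ u → t ≠ v → ¬ G.Adj u t → ¬ G.Adj v t →
      t ∈ (scompl G S).commonNeighbors u v := fun t ht htu htv hut hvt =>
    ((scompl G S).mem_commonNeighbors).2
      ⟨(scompl_adj_iff_of_mem hu ht).2 ⟨htu.symm, hut⟩,
        (scompl_adj_iff_of_mem hv ht).2 ⟨htv.symm, hvt⟩⟩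
  rcases hdf.eq_or_adj_of_adj_commonNeighbors (hcommon w hw hwu hwv huw hvw)
    (hcommon z hz hzu hzv huz hvz) ((scompl_adj_iff_of_mem hw hz).2 h) with huv' | huv'
  · exact huv.ne huv'
  · exact ((scompl_adj_iff_of_mem hu hv).1 huv').2 huv

theorem not_adj_of_scompl_diamondFree_of_neighbors (hdf : DiamondFree (scompl G S))
    (hx : x ∈ S) (hy : y ∈ S) (hxy : G.Adj x y) {a b : V} (ha : a ∉ S) (hb : b ∉ S)
    (hxa : G.Adj x a) (hya : G.Adj y a) (hxb : G.Adj x b) (hyb : G.Adj y b) :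
    ¬ G.Adj a b := by
  intro hab
  have hcommon : ∀ t ∉ S, G.Adj x t → G.Adj y t → t ∈ (scompl G S).commonNeighbors x y :=
    fun t ht hxt hyt => ((scompl G S).mem_commonNeighbors).2
      ⟨(scompl_adj_iff_of_notMem_right ht).2 hxt, (scompl_adj_iff_of_notMem_right ht).2 hyt⟩
  rcases hdf.eq_or_adj_of_adj_commonNeighbors (hcommon a ha hxa hya) (hcommon b hb hxb hyb)
    ((scompl_adj_iff_of_notMem_left ha).2 hab) with hxy' | hxy'
  · exact hxy.ne hxy'
  · exact ((scompl_adj_iff_of_mem hx hy).1 hxy').2 hxy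

end

theorem stmt15_general {V : Type*} (G : SimpleGraph V)
    (S : Set V) (u v : V) (hu : u ∈ S) (hv : v ∈ S) (huv : G.Adj u v)
    (hdf : DiamondFree (scompl G S))
    (NS : Set V) (hNS : NS = {w : V | w ∈ S ∧ w ≠ u ∧ w ≠ v ∧ ¬ G.Adj u w ∧ ¬ G.Adj v w})
    (x y : V) (hx : x ∈ NS) (hy : y ∈ NS) (hxy : G.Adj x y)
    (J : Set V) (hJ : J = {w : V | (w = x ∨ G.Adj x w) ∧ (w = y ∨ G.Adj y w) ∧
      w ≠ u ∧ w ≠ v ∧ ¬ G.Adj u w ∧ ¬ G.Adj v w}) :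
    NS ⊆ J ∧ ∀ a ∈ J \ S, ∀ b ∈ J \ S, ¬ G.Adj a b := by
  subst hNS hJ
  obtain ⟨hxS, hxu, hxv, hux, hvx⟩ := hx
  obtain ⟨hyS, hyu, hyv, huy, hvy⟩ := hy
  constructor
  · rintro w ⟨hwS, hwu, hwv, huw, hvw⟩
    refine ⟨?_, ?_, hwu, hwv, huw, hvw⟩
    · exact (eq_or_adj_of_scompl_diamondFree_of_nonneighbors hdf hu hv huv
        hxS hxu hxv hux hvx hwS hwu hwv huw hvw).imp Eq.symm id
    · exact (eq_or_adj_of_scompl_diamondFree_of_nonneighbors hdf hu hv huv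
        hyS hyu hyv huy hvy hwS hwu hwv huw hvw).imp Eq.symm id
  · rintro a ⟨⟨hxa, hya, -⟩, haS⟩ b ⟨⟨hxb, hyb, -⟩, hbS⟩
    have adj_of_notMem {s t : V} (hs : s ∈ S) (ht : t ∉ S) (h : t = s ∨ G.Adj s t) :
        G.Adj s t := h.resolve_left fun hts => ht (hts ▸ hs)
    exact not_adj_of_scompl_diamondFree_of_neighbors hdf hxS hyS hxy haS hbS
      (adj_of_notMem hxS haS hxa) (adj_of_notMem hyS haS hya)
      (adj_of_notMem hxS hbS hxb) (adj_of_notMem hyS hbS hyb)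

theorem stmt15 {V : Type*} [Fintype V] (G : SimpleGraph V)
    (S : Set V) (u v : V) (hu : u ∈ S) (hv : v ∈ S) (huv : G.Adj u v)
    (hdf : DiamondFree (scompl G S))
    (NS : Set V) (hNS : NS = {w : V | w ∈ S ∧ w ≠ u ∧ w ≠ v ∧ ¬ G.Adj u w ∧ ¬ G.Adj v w})
    (x y : V) (hx : x ∈ NS) (hy : y ∈ NS) (hxy : G.Adj x y)
    (J : Set V) (hJ : J = {w : V | (w = x ∨ G.Adj x w) ∧ (w = y ∨ G.Adj y w) ∧
      w ≠ u ∧ w ≠ v ∧ ¬ G.Adj u w ∧ ¬ G.Adj v w}) :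
    NS ⊆ J ∧ ∀ a ∈ J \ S, ∀ b ∈ J \ S, ¬ G.Adj a b :=
  stmt15_general G S u v hu hv huv hdf NS hNS x y hx hy hxy J hJ
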